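/- arXiv:1901.03676 — 7 statements merged into one kernel-verified Lean document; each statement's English description precedes it below -/
import Mathlib

section
/- Let P and N be finite index sets, A a real P×N matrix (the edge–node incidence matrix of a water network), and for each p ∈ P let ψ_p : ℝ → ℝ be a strictly increasing function (the pressure-drop law of edge p, covering both lossy pipes and pumps with flow-decreasing pressure gain). Suppose f, f̃ ∈ ℝ^P and h, h̃ ∈ ℝ^N satisfy Aᵀ f = Aᵀ f̃ (equal water injections) and, for every p ∈ P, (A h)_p = ψ_p(f_p) and (A h̃)_p = ψ_p(f̃_p). Then f = f̃ (and consequently A h = A h̃, i.e., all pressure differences coincide). In particular, the water flow equations have at most one solution in the flows. -/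
open Matrix

/-- Uniqueness of the water-flow solution: with strictly increasing pressure-drop
laws `ψ p` on every edge, equal injections force equal flows (and hence equal
pressure differences). -/
theorem waterflow_unique_flows {P N : Type*} [Fintype P] [Fintype N]
    (A : Matrix P N ℝ) (ψ : P → ℝ → ℝ) (hψ : ∀ p, StrictMono (ψ p))
    (f f' : P → ℝ) (h h' : N → ℝ)
    (hinj : Aᵀ.mulVec f = Aᵀ.mulVec f')
    (hf : ∀ p, A.mulVec h p = ψ p (f p))
    (hf' : ∀ p, A.mulVec h' p = ψ p (f' p)) :
    f = f' ∧ A.mulVec h = A.mulVec h' := by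
  have key : ∑ p, (f p - f' p) * (ψ p (f p) - ψ p (f' p)) = 0 := by
    have e1 : ∀ p, (f p - f' p) * (ψ p (f p) - ψ p (f' p))
        = (f p - f' p) * (A.mulVec h p - A.mulVec h' p) := by
      intro p; rw [hf, hf']
    calc ∑ p, (f p - f' p) * (ψ p (f p) - ψ p (f' p))
        = ∑ p, (f - f') p * (A.mulVec (h - h') p) := by
          refine Finset.sum_congr rfl fun p _ => ?_
          rw [e1 p, A.mulVec_sub]
          simp [Pi.sub_apply]
      _ = (f - f') ⬝ᵥ A.mulVec (h - h') := rfl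
      _ = Aᵀ.mulVec (f - f') ⬝ᵥ (h - h') := by
          rw [Matrix.dotProduct_mulVec, ← Matrix.mulVec_transpose]
      _ = 0 := by
          rw [Aᵀ.mulVec_sub]
          have : Aᵀ.mulVec f - Aᵀ.mulVec f' = 0 := by rw [hinj]; simp
          rw [this]; simp
  have hnn : ∀ p ∈ Finset.univ, 0 ≤ (f p - f' p) * (ψ p (f p) - ψ p (f' p)) := by
    intro p _
    rcases lt_trichotomy (f p) (f' p) with hlt | heq | hgt
    · have := hψ p hlt
      nlinarith
    · simp [heq]
    · have := hψ p hgt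
      nlinarith
  have hzero := (Finset.sum_eq_zero_iff_of_nonneg hnn).mp key
  have hff : f = f' := by
    funext p
    have hz := hzero p (Finset.mem_univ p)
    by_contra hne
    rcases lt_or_gt_of_ne hne with hlt | hgt
    · have := hψ p hlt; nlinarith
    · have := hψ p hgt; nlinarith
  refine ⟨hff, ?_⟩
  funext p
  rw [hf p, hf' p, hff]
end

section
/- Let G be a finite connected simple graph on vertex set V, and for every ordered pair (u,v) of adjacent vertices let ψ_{u,v} : ℝ → ℝ be a strictly increasing function satisfying ψ_{v,u}(x) = −ψ_{u,v}(−x) for all x. Let S ⊆ V be a nonempty set of fixed-pressure nodes. Suppose (f, h) and (f', h') each consist of a flow on G and a potential on V such that h(u) − h(v) = ψ_{u,v}(f(u,v)) and h'(u) − h'(v) = ψ_{u,v}(f'(u,v)) for every adjacent pair (u,v). If h(i) = h'(i) for every i ∈ S, and the divergence of f equals the divergence of f' at every vertex i ∈ V \ S, then f = f' and h = h'. In other words, fixing the pressures at the nodes of S and the injections at the remaining nodes determines at most one solution of the water flow equations. -/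
/-- Uniqueness of the water-flow solution with multiple fixed-pressure nodes:
fixing pressures on a nonempty set `S` and divergences (injections) elsewhere
determines at most one pair (flow, potential) compatible with the strictly
increasing, skew-symmetric pressure-drop laws `ψ`. -/
theorem waterflow_unique_fixed_pressure {V : Type*} [Fintype V]
    (G : SimpleGraph V) (hG : G.Connected)
    (ψ : V → V → ℝ → ℝ)
    (hmono : ∀ u v, G.Adj u v → StrictMono (ψ u v))
    (hskew : ∀ u v, G.Adj u v → ∀ x, ψ v u x = -(ψ u v (-x)))
    (S : Set V) (hS : S.Nonempty)
    (f f' : V → V → ℝ) (h h' : V → ℝ)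
    (hf_skew : ∀ u v, f u v = - f v u)
    (hf_supp : ∀ u v, ¬ G.Adj u v → f u v = 0)
    (hf'_skew : ∀ u v, f' u v = - f' v u)
    (hf'_supp : ∀ u v, ¬ G.Adj u v → f' u v = 0)
    (hpd : ∀ u v, G.Adj u v → h u - h v = ψ u v (f u v))
    (hpd' : ∀ u v, G.Adj u v → h' u - h' v = ψ u v (f' u v))
    (hhS : ∀ i ∈ S, h i = h' i)
    (hdiv : ∀ i, i ∉ S → ∑ w, f i w = ∑ w, f' i w) :
    f = f' ∧ h = h' := by
  classical
  set g : V → ℝ := fun u => h u - h' u with hg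
  set d : V → V → ℝ := fun u v => f u v - f' u v with hd
  set F : V → V → ℝ := fun u v => d u v * (g u - g v) with hF
  have hdskew : ∀ u v, d u v = - d v u := by
    intro u v
    simp only [hd]
    rw [hf_skew u v, hf'_skew u v]; ring
  -- each term nonnegative
  have hFnn : ∀ u v, 0 ≤ F u v := by
    intro u v
    by_cases hadj : G.Adj u v
    · have hgsub : g u - g v = ψ u v (f u v) - ψ u v (f' u v) := by
        simp only [hg]
        rw [show h u - h' u - (h v - h' v) = (h u - h v) - (h' u - h' v) by ring,
          hpd u v hadj, hpd' u v hadj]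
      simp only [hF, hgsub, hd]
      rcases lt_trichotomy (f u v) (f' u v) with hlt | heq | hgt
      · have h1 := hmono u v hadj hlt
        nlinarith
      · simp [heq]
      · exact mul_nonneg (by linarith) (by linarith [hmono u v hadj hgt])
    · simp only [hF, hd, hf_supp u v hadj, hf'_supp u v hadj]
      simp
  -- each vertex term g u * ∑ d u v = 0
  have hgD : ∀ u : V, g u * ∑ v, d u v = 0 := by
    intro u
    by_cases hu : u ∈ S
    · simp [hg, hhS u hu]
    · have : ∑ v, d u v = 0 := by
        simp only [hd]
        rw [Finset.sum_sub_distrib, hdiv u hu, sub_self]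
      simp [this]
  -- total sum is zero
  have hsum : ∑ u, ∑ v, F u v = 0 := by
    have expand : ∀ u v : V, F u v = d u v * g u - d u v * g v := by
      intro u v; simp only [hF]; ring
    calc ∑ u, ∑ v, F u v
        = (∑ u, ∑ v, d u v * g u) - ∑ u, ∑ v, d u v * g v := by
          simp only [expand, Finset.sum_sub_distrib]
      _ = (∑ u, g u * ∑ v, d u v) - ∑ v, ∑ u, d u v * g v := by
          rw [Finset.sum_comm (f := fun u v => d u v * g v)]
          congr 1
          refine Finset.sum_congr rfl fun u _ => ?_
          rw [Finset.mul_sum]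
          exact Finset.sum_congr rfl fun v _ => by ring
      _ = (∑ u, g u * ∑ v, d u v) + ∑ v, g v * ∑ u, d v u := by
          have key : ∑ v, ∑ u, d u v * g v = -∑ v, g v * ∑ u, d v u := by
            rw [← Finset.sum_neg_distrib]
            refine Finset.sum_congr rfl fun v _ => ?_
            rw [Finset.mul_sum, ← Finset.sum_neg_distrib]
            refine Finset.sum_congr rfl fun u _ => ?_
            rw [hdskew u v]; ring
          rw [key]; ring
      _ = 0 := by simp [hgD]
  -- hence each F u v = 0
  have hF0 : ∀ u v, F u v = 0 := by
    have h1 : ∀ u ∈ (Finset.univ : Finset V), (0:ℝ) ≤ ∑ v, F u v :=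
      fun u _ => Finset.sum_nonneg fun v _ => hFnn u v
    intro u v
    have h2 := (Finset.sum_eq_zero_iff_of_nonneg h1).mp hsum u (Finset.mem_univ u)
    exact (Finset.sum_eq_zero_iff_of_nonneg fun v _ => hFnn u v).mp h2 v
      (Finset.mem_univ v)
  -- flows agree
  have hfeq : ∀ u v, f u v = f' u v := by
    intro u v
    by_cases hadj : G.Adj u v
    · have hF0' := hF0 u v
      have hgsub : g u - g v = ψ u v (f u v) - ψ u v (f' u v) := by
        simp only [hg]
        rw [show h u - h' u - (h v - h' v) = (h u - h v) - (h' u - h' v) by ring,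
          hpd u v hadj, hpd' u v hadj]
      simp only [hF, hgsub, hd] at hF0'
      rcases mul_eq_zero.mp hF0' with h1 | h1
      · linarith
      · exact (hmono u v hadj).injective (by linarith)
    · rw [hf_supp u v hadj, hf'_supp u v hadj]
  -- g is constant along edges
  have hgedge : ∀ u v, G.Adj u v → g u = g v := by
    intro u v hadj
    have : h u - h v = h' u - h' v := by
      rw [hpd u v hadj, hpd' u v hadj, hfeq u v]
    simp only [hg]; linarith
  have hwalk : ∀ (u v : V) (p : G.Walk u v), g u = g v := by
    intro u v p
    induction p with
    | nil => rfl
    | cons hadj p ih => rw [hgedge _ _ hadj]; exact ih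
  obtain ⟨s, hs⟩ := hS
  have hgzero : ∀ u, g u = 0 := by
    intro u
    have hgs : g s = 0 := by simp [hg, hhS s hs]
    obtain ⟨p⟩ := hG.preconnected u s
    rw [hwalk u s p, hgs]
  refine ⟨funext fun u => funext fun v => hfeq u v, funext fun u => ?_⟩
  have := hgzero u
  simp only [hg] at this
  linarith
end

section
/- Let P and N be finite index sets, A a real P×N matrix, c_p > 0 for each p ∈ P, and d ∈ ℝ^N. Suppose f̄ ∈ ℝ^P and h̄ ∈ ℝ^N satisfy Aᵀ f̄ = d and (A h̄)_p = c_p · sign(f̄_p) · f̄_p² for every p ∈ P (the Darcy–Weisbach water flow equations in a network without pumps). Then f̄ is the unique minimizer of the convex energy function F(f) = ∑_{p∈P} (c_p/3)|f_p|³ over the affine set {f ∈ ℝ^P : Aᵀ f = d}; that is, for every f with Aᵀ f = d and f ≠ f̄ one has F(f) > F(f̄). -/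
open Matrix

lemma key_le (x y : ℝ) : |x| ^ 3 + 3 * (|x| * x) * (y - x) ≤ |y| ^ 3 := by
  rcases le_or_gt 0 x with hx | hx <;> rcases le_or_gt 0 y with hy | hy
  · rw [abs_of_nonneg hx, abs_of_nonneg hy]; nlinarith [sq_nonneg (y - x), sq_nonneg (y + x)]
  · rw [abs_of_nonneg hx, abs_of_neg hy]; nlinarith [sq_nonneg (y - x), sq_nonneg (y + x)]
  · rw [abs_of_neg hx, abs_of_nonneg hy]; nlinarith [sq_nonneg (y - x), sq_nonneg (y + x)]
  · rw [abs_of_neg hx, abs_of_neg hy]; nlinarith [sq_nonneg (y - x), sq_nonneg (y + x)]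

lemma key_lt (x y : ℝ) (h : y ≠ x) : |x| ^ 3 + 3 * (|x| * x) * (y - x) < |y| ^ 3 := by
  have hne := sub_ne_zero.mpr h
  have h2 : 0 < (y - x) ^ 2 := by positivity
  rcases le_or_gt 0 x with hx | hx <;> rcases le_or_gt 0 y with hy | hy
  · rw [abs_of_nonneg hx, abs_of_nonneg hy]; nlinarith [sq_nonneg (y + x), mul_nonneg hx hy]
  · rw [abs_of_nonneg hx, abs_of_neg hy]; nlinarith [sq_nonneg (y + x), mul_nonneg hx (neg_nonneg.mpr hy.le)]
  · rw [abs_of_neg hx, abs_of_nonneg hy]; nlinarith [sq_nonneg (y + x)]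
  · rw [abs_of_neg hx, abs_of_neg hy]; nlinarith [sq_nonneg (y + x)]

/-- A Darcy–Weisbach water-flow solution in a pump-free network is the unique
minimizer of the convex energy function `F f = ∑ (c p / 3) |f p|³` over the
affine set of flows satisfying the injections. -/
theorem darcy_weisbach_solution_is_unique_minimizer {P N : Type*} [Fintype P] [Fintype N]
    (A : Matrix P N ℝ) (c : P → ℝ) (hc : ∀ p, 0 < c p) (d : N → ℝ)
    (fbar : P → ℝ) (hbar : N → ℝ)
    (hfeas : Aᵀ.mulVec fbar = d)
    (hdw : ∀ p, A.mulVec hbar p = c p * Real.sign (fbar p) * (fbar p) ^ 2) :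
    ∀ f : P → ℝ, Aᵀ.mulVec f = d → f ≠ fbar →
      ∑ p, c p / 3 * |fbar p| ^ 3 < ∑ p, c p / 3 * |f p| ^ 3 := by
  intro f hf hne
  have hsign : ∀ p, c p * Real.sign (fbar p) * (fbar p) ^ 2 = c p * (|fbar p| * fbar p) := by
    intro p
    rcases lt_trichotomy (fbar p) 0 with h | h | h
    · rw [Real.sign_of_neg h, abs_of_neg h]; ring
    · simp [h]
    · rw [Real.sign_of_pos h, abs_of_pos h]; ring
  have h0 : Aᵀ.mulVec (f - fbar) = 0 := by
    rw [Matrix.mulVec_sub, hf, hfeas, sub_self]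
  have hcross : ∑ p, (f p - fbar p) * (c p * (|fbar p| * fbar p)) = 0 := by
    have hz : (f - fbar) ⬝ᵥ A.mulVec hbar = 0 := by
      rw [Matrix.dotProduct_mulVec, ← Matrix.mulVec_transpose, h0, zero_dotProduct]
    calc ∑ p, (f p - fbar p) * (c p * (|fbar p| * fbar p))
        = (f - fbar) ⬝ᵥ A.mulVec hbar := by
          simp only [dotProduct, Pi.sub_apply, hdw, hsign]
      _ = 0 := hz
  obtain ⟨p0, hp0⟩ : ∃ p, f p ≠ fbar p := by
    by_contra h; push_neg at h; exact hne (funext h)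
  have hlt : ∑ p, (c p / 3 * |fbar p| ^ 3 + (f p - fbar p) * (c p * (|fbar p| * fbar p)))
      < ∑ p, c p / 3 * |f p| ^ 3 := by
    apply Finset.sum_lt_sum
    · intro p _
      have := key_le (fbar p) (f p)
      have hcp := hc p
      nlinarith
    · refine ⟨p0, Finset.mem_univ _, ?_⟩
      have := key_lt (fbar p0) (f p0) hp0
      have hcp := hc p0
      nlinarith
  calc ∑ p, c p / 3 * |fbar p| ^ 3
      = ∑ p, (c p / 3 * |fbar p| ^ 3 + (f p - fbar p) * (c p * (|fbar p| * fbar p))) := by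
        rw [Finset.sum_add_distrib, hcross, add_zero]
    _ < ∑ p, c p / 3 * |f p| ^ 3 := hlt
end

section
/- Let P and N be finite index sets, A a real P×N matrix, c_p > 0 for each p ∈ P, and d ∈ ℝ^N such that the affine set {f ∈ ℝ^P : Aᵀ f = d} is nonempty. If f̄ minimizes F(f) = ∑_{p∈P} (c_p/3)|f_p|³ over this affine set, then there exists ξ ∈ ℝ^N (a vector of Lagrange multipliers / nodal pressures) such that c_p · sign(f̄_p) · f̄_p² = (A ξ)_p for every p ∈ P; hence (f̄, ξ) satisfies the Darcy–Weisbach water flow equations. -/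
/-! Lagrange multipliers for a linear constraint. The energy is differentiable with gradient
`p ↦ c p * (f̄ p * |f̄ p|)`, so minimality of `f̄` on the affine set `Aᵀ f = d` makes the gradient
vanish on `ker Aᵀ`. In finite dimension the annihilator of `ker Aᵀ` is the range of `A`, so the
gradient equals `A ξ`; finally `x |x| = sign x * x ^ 2`. -/

open Matrix

theorem Real.sign_mul_sq (x : ℝ) : Real.sign x * x ^ 2 = x * |x| := by
  rcases lt_trichotomy x 0 with hx | rfl | hx
  · rw [Real.sign_of_neg hx, abs_of_neg hx]; ring
  · simp
  · rw [Real.sign_of_pos hx, abs_of_pos hx]; ring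

theorem hasDerivAt_abs_pow_three (x : ℝ) : HasDerivAt (fun y : ℝ ↦ |y| ^ 3) (3 * (x * |x|)) x := by
  convert hasDerivAt_abs_rpow x (p := 3) (by norm_num) using 1
  · ext y
    exact_mod_cast (Real.rpow_natCast |y| 3).symm
  · norm_num
    ring

theorem hasFDerivAt_sum_mul_abs_pow_three {P : Type*} [Fintype P] (c x : P → ℝ) :
    HasFDerivAt (fun f : P → ℝ ↦ ∑ p, c p / 3 * |f p| ^ 3)
      (∑ p, (c p * (x p * |x p|)) • ContinuousLinearMap.proj (R := ℝ) (φ := fun _ ↦ ℝ) p) x := by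
  refine HasFDerivAt.fun_sum fun p _ ↦ ?_
  refine (((hasDerivAt_abs_pow_three (x p)).comp_hasFDerivAt x
    (ContinuousLinearMap.proj (R := ℝ) (φ := fun _ ↦ ℝ) p).hasFDerivAt).const_mul
      (c p / 3)).congr_fderiv ?_
  rw [smul_smul]
  congr 1
  ring

theorem IsMinOn.hasFDerivAt_apply_eq_zero_of_mem_ker {E F : Type*} [NormedAddCommGroup E]
    [NormedSpace ℝ E] [AddCommGroup F] [Module ℝ F] {f : E → ℝ} {f' : E →L[ℝ] ℝ}
    {L : E →ₗ[ℝ] F} {x v : E} (hmin : IsMinOn f {y | L y = L x} x) (hf : HasFDerivAt f f' x)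
    (hv : v ∈ LinearMap.ker L) : f' v = 0 :=
  hmin.hasLineDerivAt_eq_zero (hf.hasLineDerivAt v) <| .of_forall fun t ↦ by
    simp [LinearMap.mem_ker.mp hv]

theorem Matrix.exists_mulVec_eq_of_forall_dotProduct_eq_zero {K m n : Type*} [Field K]
    [Fintype m] [Fintype n] (A : Matrix m n K) {g : m → K}
    (hg : ∀ v, Aᵀ *ᵥ v = 0 → g ⬝ᵥ v = 0) : ∃ ξ, A *ᵥ ξ = g := by
  classical
  have hmem : dotProductEquiv K m g ∈ LinearMap.range (Aᵀ.mulVecLin).dualMap := by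
    rw [LinearMap.range_dualMap_eq_dualAnnihilator_ker, Submodule.mem_dualAnnihilator]
    exact hg
  obtain ⟨ψ, hψ⟩ := hmem
  obtain ⟨ξ, rfl⟩ := (dotProductEquiv K n).surjective ψ
  refine ⟨ξ, funext fun p ↦ ?_⟩
  have hp := LinearMap.congr_fun hψ (Pi.single p 1)
  simp only [LinearMap.dualMap_apply, dotProductEquiv_apply_apply, mulVecLin_apply,
    dotProduct_single, mul_one] at hp
  rw [← hp, dotProduct_mulVec, vecMul_transpose, dotProduct_single, mul_one]

theorem energy_minimizer_satisfies_darcy_weisbach_general {P N : Type*} [Fintype P] [Fintype N]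
    (A : Matrix P N ℝ) (c : P → ℝ) (d : N → ℝ)
    (fbar : P → ℝ)
    (hfeas : Aᵀ.mulVec fbar = d)
    (hmin : ∀ f : P → ℝ, Aᵀ.mulVec f = d →
      ∑ p, c p / 3 * |fbar p| ^ 3 ≤ ∑ p, c p / 3 * |f p| ^ 3) :
    ∃ ξ : N → ℝ, ∀ p, c p * Real.sign (fbar p) * (fbar p) ^ 2 = A.mulVec ξ p := by
  have hminOn : IsMinOn (fun f : P → ℝ ↦ ∑ p, c p / 3 * |f p| ^ 3)
      {f | Aᵀ.mulVecLin f = Aᵀ.mulVecLin fbar} fbar :=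
    fun f hf ↦ hmin f (hfeas ▸ hf)
  obtain ⟨ξ, hξ⟩ := A.exists_mulVec_eq_of_forall_dotProduct_eq_zero
    (g := fun p ↦ c p * (fbar p * |fbar p|)) fun v hv ↦ by
      simpa [dotProduct] using hminOn.hasFDerivAt_apply_eq_zero_of_mem_ker
        (hasFDerivAt_sum_mul_abs_pow_three c fbar) (LinearMap.mem_ker.mpr hv)
  exact ⟨ξ, fun p ↦ by rw [hξ, mul_assoc, Real.sign_mul_sq]⟩

/-- A minimizer of the energy function `F f = ∑ (c p / 3)|f p|³` over
`{f : Aᵀ f = d}` admits Lagrange multipliers (nodal pressures) `ξ` so that the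
Darcy–Weisbach equations hold. -/
theorem energy_minimizer_satisfies_darcy_weisbach {P N : Type*} [Fintype P] [Fintype N]
    (A : Matrix P N ℝ) (c : P → ℝ) (hc : ∀ p, 0 < c p) (d : N → ℝ)
    (fbar : P → ℝ)
    (hfeas : Aᵀ.mulVec fbar = d)
    (hmin : ∀ f : P → ℝ, Aᵀ.mulVec f = d →
      ∑ p, c p / 3 * |fbar p| ^ 3 ≤ ∑ p, c p / 3 * |f p| ^ 3) :
    ∃ ξ : N → ℝ, ∀ p, c p * Real.sign (fbar p) * (fbar p) ^ 2 = A.mulVec ξ p :=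
  energy_minimizer_satisfies_darcy_weisbach_general A c d fbar hfeas hmin
end

section
/- Let P and N be finite index sets, A a real P×N matrix, c_p > 0 for each p ∈ P, ρ > 0 a real exponent (ρ = 1.852 for the Hazen–Williams law, ρ = 2 for Darcy–Weisbach), and d ∈ ℝ^N. Suppose f̄ ∈ ℝ^P and h̄ ∈ ℝ^N satisfy Aᵀ f̄ = d and (A h̄)_p = c_p · sign(f̄_p) · |f̄_p|^ρ for every p ∈ P. Then f̄ is the unique minimizer of the convex function F_ρ(f) = ∑_{p∈P} (c_p/(ρ+1))|f_p|^{ρ+1} over the affine set {f ∈ ℝ^P : Aᵀ f = d}. -/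
/-!
For `c > 0` the edge potential `t ↦ c / (ρ + 1) * |t| ^ (ρ + 1)` is strictly convex with derivative
`t ↦ c * sign t * |t| ^ ρ`, so it lies strictly above each of its tangent lines. Summing the tangent
inequalities at `fbar` over all edges, the pressure-drop law turns the linear term into
`∑ p, (A hbar)_p (f - fbar)_p = hbar ⬝ᵥ Aᵀ (f - fbar)`, which vanishes for every feasible `f`.
-/

open Matrix

theorem StrictConvexOn.add_mul_sub_lt_of_hasDerivAt {S : Set ℝ} {f : ℝ → ℝ} {f' x y : ℝ}
    (hf : StrictConvexOn ℝ S f) (hx : x ∈ S) (hy : y ∈ S) (hxy : x ≠ y)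
    (hf' : HasDerivAt f f' x) : f x + f' * (y - x) < f y := by
  rcases hxy.lt_or_gt with h | h
  · have := hf.lt_slope_of_hasDerivAt hx hy h hf'
    rw [slope_def_field, lt_div_iff₀ (sub_pos.mpr h)] at this
    linarith
  · have := hf.slope_lt_of_hasDerivAt hy hx h hf'
    rw [slope_def_field, div_lt_iff₀ (sub_pos.mpr h)] at this
    linarith

namespace Real

theorem abs_rpow_sub_two_mul_self (p x : ℝ) : |x| ^ (p - 2) * x = sign x * |x| ^ (p - 1) := by
  rcases eq_or_ne x 0 with rfl | hx
  · simp
  · have hsign : sign x * |x| = x := by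
      rcases hx.lt_or_gt with hx | hx
      · rw [sign_of_neg hx, abs_of_neg hx, neg_one_mul, neg_neg]
      · rw [sign_of_pos hx, abs_of_pos hx, one_mul]
    calc |x| ^ (p - 2) * x = sign x * (|x| ^ (p - 2) * |x|) := by rw [mul_left_comm, hsign]
      _ = sign x * |x| ^ (p - 1) := by rw [← rpow_add_one (abs_ne_zero.mpr hx)]; ring_nf

theorem hasDerivAt_abs_rpow_eq_sign_mul (x : ℝ) {p : ℝ} (hp : 1 < p) :
    HasDerivAt (fun t : ℝ ↦ |t| ^ p) (p * sign x * |x| ^ (p - 1)) x := by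
  simpa only [mul_assoc, abs_rpow_sub_two_mul_self] using hasDerivAt_abs_rpow x hp

theorem strictMono_sign_mul_abs_rpow {r : ℝ} (hr : 0 < r) :
    StrictMono fun x : ℝ ↦ sign x * |x| ^ r := by
  refine strictMono_of_odd_strictMonoOn_nonneg (fun x ↦ by simp [sign_neg]) ?_
  refine (strictMonoOn_rpow_Ici_of_exponent_pos hr).congr fun x (hx : 0 ≤ x) ↦ ?_
  rcases hx.eq_or_lt with rfl | hx
  · simp [zero_rpow hr.ne']
  · rw [sign_of_pos hx, abs_of_pos hx, one_mul]

theorem strictConvexOn_abs_rpow {p : ℝ} (hp : 1 < p) :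
    StrictConvexOn ℝ Set.univ fun x : ℝ ↦ |x| ^ p := by
  refine StrictMono.strictConvexOn_univ_of_deriv
    (continuous_abs.rpow_const fun _ ↦ Or.inr (by linarith)) ?_
  have hderiv : deriv (fun x : ℝ ↦ |x| ^ p) = fun x ↦ p * (sign x * |x| ^ (p - 1)) :=
    funext fun x ↦ by rw [(hasDerivAt_abs_rpow_eq_sign_mul x hp).deriv, mul_assoc]
  rw [hderiv]
  exact (strictMono_sign_mul_abs_rpow (sub_pos.mpr hp)).const_mul (by linarith)

end Real

theorem tangent_lt_div_mul_abs_rpow_add_one {c ρ x y : ℝ} (hc : 0 < c) (hρ : 0 < ρ)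
    (hxy : x ≠ y) :
    c / (ρ + 1) * |x| ^ (ρ + 1) + c * Real.sign x * |x| ^ ρ * (y - x)
      < c / (ρ + 1) * |y| ^ (ρ + 1) := by
  have hp : 1 < ρ + 1 := by linarith
  have htangent := (Real.strictConvexOn_abs_rpow hp).add_mul_sub_lt_of_hasDerivAt
    (Set.mem_univ x) (Set.mem_univ y) hxy (Real.hasDerivAt_abs_rpow_eq_sign_mul x hp)
  have hscaled := mul_lt_mul_of_pos_left htangent (div_pos hc (by linarith : (0 : ℝ) < ρ + 1))
  rw [add_sub_cancel_right] at hscaled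
  calc c / (ρ + 1) * |x| ^ (ρ + 1) + c * Real.sign x * |x| ^ ρ * (y - x)
      = c / (ρ + 1) * (|x| ^ (ρ + 1) + (ρ + 1) * Real.sign x * |x| ^ ρ * (y - x)) := by
        field_simp
    _ < c / (ρ + 1) * |y| ^ (ρ + 1) := hscaled

theorem Matrix.mulVec_dotProduct_eq_zero_of_transpose_mulVec_eq_zero {m n R : Type*}
    [Fintype m] [Fintype n] [CommSemiring R] (A : Matrix m n R) (h : n → R) {g : m → R}
    (hg : Aᵀ *ᵥ g = 0) :
    (A *ᵥ h) ⬝ᵥ g = 0 := by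
  rw [dotProduct_comm, dotProduct_mulVec, ← mulVec_transpose, hg, zero_dotProduct]

/-- Generalized pressure-drop law with exponent `ρ > 0` (Hazen–Williams for
`ρ = 1.852`, Darcy–Weisbach for `ρ = 2`): a water-flow solution is the unique
minimizer of `F_ρ f = ∑ (c p / (ρ+1)) |f p|^(ρ+1)` over `{f : Aᵀ f = d}`. -/
theorem general_law_solution_is_unique_minimizer {P N : Type*} [Fintype P] [Fintype N]
    (A : Matrix P N ℝ) (c : P → ℝ) (hc : ∀ p, 0 < c p) (ρ : ℝ) (hρ : 0 < ρ)
    (d : N → ℝ) (fbar : P → ℝ) (hbar : N → ℝ)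
    (hfeas : Aᵀ.mulVec fbar = d)
    (hlaw : ∀ p, A.mulVec hbar p = c p * Real.sign (fbar p) * |fbar p| ^ ρ) :
    ∀ f : P → ℝ, Aᵀ.mulVec f = d → f ≠ fbar →
      ∑ p, c p / (ρ + 1) * |fbar p| ^ (ρ + 1) < ∑ p, c p / (ρ + 1) * |f p| ^ (ρ + 1) := by
  intro f hf hne
  have hlinear : ∑ p, A.mulVec hbar p * (f p - fbar p) = 0 :=
    A.mulVec_dotProduct_eq_zero_of_transpose_mulVec_eq_zero hbar (g := f - fbar)
      (by rw [mulVec_sub, hf, hfeas, sub_self])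
  have htangent : ∀ p, f p ≠ fbar p → c p / (ρ + 1) * |fbar p| ^ (ρ + 1)
      + A.mulVec hbar p * (f p - fbar p) < c p / (ρ + 1) * |f p| ^ (ρ + 1) := fun p hp ↦ by
    rw [hlaw p]
    exact tangent_lt_div_mul_abs_rpow_add_one (hc p) hρ (Ne.symm hp)
  obtain ⟨p₀, hp₀⟩ := Function.ne_iff.mp hne
  calc ∑ p, c p / (ρ + 1) * |fbar p| ^ (ρ + 1)
      = ∑ p, (c p / (ρ + 1) * |fbar p| ^ (ρ + 1) + A.mulVec hbar p * (f p - fbar p)) := by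
        rw [Finset.sum_add_distrib, hlinear, add_zero]
    _ < ∑ p, c p / (ρ + 1) * |f p| ^ (ρ + 1) := by
        refine Finset.sum_lt_sum (fun p _ ↦ ?_) ⟨p₀, Finset.mem_univ p₀, htangent p₀ hp₀⟩
        rcases eq_or_ne (f p) (fbar p) with heq | hp
        · simp [heq]
        · exact (htangent p hp).le
end

section
/- Let P and N be finite index sets, A a real P×N matrix, c_p > 0 for each p ∈ P, and d ∈ ℝ^N. Define the energy function G(h) = (2/3) ∑_{p∈P} |(A h)_p|^{3/2} / √(c_p) − ∑_{n∈N} d_n h_n for h ∈ ℝ^N. Suppose h̄ ∈ ℝ^N is such that the flow vector f ∈ ℝ^P defined by f_p = sign((A h̄)_p) · √(|(A h̄)_p| / c_p) satisfies Aᵀ f = d. Then h̄ is a global minimizer of G over ℝ^N, i.e., G(h) ≥ G(h̄) for all h ∈ ℝ^N. -/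
open Matrix

/-!
Each edge term `t ↦ (2/3) |t|^{3/2} / √c` of `G` is convex with slope `sign t · √(|t| / c)` at `t`
(the subgradient inequality is Young's inequality with exponents `3` and `3/2`). Hence `G` is
convex, and its gradient `Aᵀ f − d` at `h̄` vanishes by hypothesis, so `h̄` is a global minimizer.
-/

namespace Real

lemma sign_mul_self (x : ℝ) : sign x * x = |x| := by
  rcases lt_trichotomy x 0 with hx | rfl | hx
  · rw [sign_of_neg hx, abs_of_neg hx]; ring
  · simp
  · rw [sign_of_pos hx, abs_of_pos hx, one_mul]

lemma abs_sign_le_one (x : ℝ) : |sign x| ≤ 1 := by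
  rcases sign_apply_eq x with h | h | h <;> simp [h]

lemma sqrt_mul_self_eq_rpow {t : ℝ} (ht : 0 ≤ t) : √t * t = t ^ ((3 : ℝ) / 2) := by
  rw [sqrt_eq_rpow, ← rpow_add_one' ht (by norm_num)]
  norm_num

lemma sqrt_mul_le_rpow_three_halves {a b : ℝ} (ha : 0 ≤ a) (hb : 0 ≤ b) :
    √a * b ≤ a ^ ((3 : ℝ) / 2) / 3 + 2 / 3 * b ^ ((3 : ℝ) / 2) := by
  have hconj : (3 : ℝ).HolderConjugate (3 / 2) :=
    holderConjugate_iff.mpr ⟨by norm_num, by norm_num⟩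
  calc √a * b ≤ √a ^ (3 : ℝ) / 3 + b ^ ((3 : ℝ) / 2) / (3 / 2) :=
        young_inequality_of_nonneg (sqrt_nonneg a) hb hconj
    _ = a ^ ((3 : ℝ) / 2) / 3 + 2 / 3 * b ^ ((3 : ℝ) / 2) := by
        rw [sqrt_eq_rpow, ← rpow_mul ha]
        norm_num
        ring

lemma sign_mul_sqrt_abs_mul_sub_le (x y : ℝ) :
    sign x * √|x| * (y - x) ≤ 2 / 3 * |y| ^ ((3 : ℝ) / 2) - 2 / 3 * |x| ^ ((3 : ℝ) / 2) := by
  have hxx : sign x * √|x| * x = |x| ^ ((3 : ℝ) / 2) := by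
    rw [mul_right_comm, sign_mul_self, mul_comm, sqrt_mul_self_eq_rpow (abs_nonneg x)]
  have hxy : sign x * √|x| * y ≤ √|x| * |y| :=
    calc sign x * √|x| * y ≤ |sign x * √|x| * y| := le_abs_self _
      _ = |sign x| * (√|x| * |y|) := by
        rw [abs_mul, abs_mul, abs_of_nonneg (sqrt_nonneg _), mul_assoc]
      _ ≤ √|x| * |y| :=
        mul_le_of_le_one_left (by positivity) (abs_sign_le_one x)
  have := sqrt_mul_le_rpow_three_halves (abs_nonneg x) (abs_nonneg y)
  rw [mul_sub, hxx]
  linarith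

end Real

lemma three_halves_energy_sub_flow_mul_le {c : ℝ} (hc : 0 < c) (x y : ℝ) :
    2 / 3 * (|x| ^ ((3 : ℝ) / 2) / √c) - Real.sign x * √(|x| / c) * x
      ≤ 2 / 3 * (|y| ^ ((3 : ℝ) / 2) / √c) - Real.sign x * √(|x| / c) * y := by
  have hsc : 0 < √c := Real.sqrt_pos.mpr hc
  have key := div_le_div_of_nonneg_right (Real.sign_mul_sqrt_abs_mul_sub_le x y) hsc.le
  rw [Real.sqrt_div (abs_nonneg x)]
  field_simp at key ⊢
  linarith

/-- If the flows recovered from the pressures `hbar` satisfy the injection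
equations, then `hbar` globally minimizes the unconstrained energy function
`G h = (2/3) ∑ |(A h)_p|^{3/2}/√c_p − dᵀ h`. -/
theorem pressure_energy_global_min {P N : Type*} [Fintype P] [Fintype N]
    (A : Matrix P N ℝ) (c : P → ℝ) (hc : ∀ p, 0 < c p) (d : N → ℝ)
    (hbar : N → ℝ)
    (hfeas : Aᵀ.mulVec
      (fun p => Real.sign (A.mulVec hbar p) * Real.sqrt (|A.mulVec hbar p| / c p)) = d) :
    ∀ h : N → ℝ,
      (2 / 3) * ∑ p, |A.mulVec hbar p| ^ ((3 : ℝ) / 2) / Real.sqrt (c p)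
          - ∑ n, d n * hbar n
        ≤ (2 / 3) * ∑ p, |A.mulVec h p| ^ ((3 : ℝ) / 2) / Real.sqrt (c p)
          - ∑ n, d n * h n := by
  intro h
  set f : P → ℝ := fun p =>
    Real.sign (A.mulVec hbar p) * Real.sqrt (|A.mulVec hbar p| / c p)
  have hpair : ∀ v : N → ℝ, ∑ n, d n * v n = ∑ p, f p * A.mulVec v p := fun v => by
    rw [← hfeas, mulVec_transpose]; exact (dotProduct_mulVec f A v).symm
  rw [hpair h, hpair hbar, Finset.mul_sum, Finset.mul_sum, ← Finset.sum_sub_distrib,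
    ← Finset.sum_sub_distrib]
  exact Finset.sum_le_sum fun p _ =>
    three_halves_energy_sub_flow_mul_le (hc p) (A.mulVec hbar p) (A.mulVec h p)
end

section
/- Let G be a finite simple graph on vertex set V and let {u,v} be an edge of G that is a bridge of G (equivalently, an edge lying on no cycle of G). Let f and f' be flows on G whose divergences agree at every vertex of V. Then f(u,v) = f'(u,v). In other words, any two solutions of the flow-conservation equations assign the same flow to every edge not belonging to a cycle. -/
/-!
Subtracting, `g = f - f'` is a skew-symmetric function supported on the edges of `G` with zero
divergence everywhere. Let `S` be the set of vertices reachable from `u` once the bridge is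
deleted; its only edge to the complement is `uv`. Summing the divergence of `g` over `S`, the
terms inside `S` cancel by skew-symmetry, and what remains is the flow across the cut, namely
`g u v`; hence `g u v = 0`.
-/

open Finset

section

variable {V M : Type*} [AddCommGroup M]

theorem Finset.sum_sum_eq_zero_of_antisymm [IsAddTorsionFree M] {g : V → V → M}
    (hg : ∀ a b, g a b = -g b a) (S : Finset V) : ∑ a ∈ S, ∑ b ∈ S, g a b = 0 := by
  have hx : ∑ a ∈ S, ∑ b ∈ S, g a b = -∑ a ∈ S, ∑ b ∈ S, g a b := by
    conv_lhs => rw [sum_comm]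
    rw [← sum_neg_distrib]
    exact sum_congr rfl fun b _ ↦ by rw [← sum_neg_distrib]; exact sum_congr rfl fun a _ ↦ hg a b
  refine (nsmul_eq_zero_iff_right two_ne_zero).1 ?_
  rw [two_nsmul]
  nth_rewrite 2 [hx]
  exact add_neg_cancel _

namespace SimpleGraph

variable {G : SimpleGraph V} {u v a b : V}

theorem IsBridge.eq_of_adj_of_reachable_of_not_reachable (h : G.IsBridge s(u, v))
    (ha : (G.deleteEdges {s(u, v)}).Reachable u a)
    (hb : ¬ (G.deleteEdges {s(u, v)}).Reachable u b) (hab : G.Adj a b) : a = u ∧ b = v := by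
  have hab' : s(a, b) = s(u, v) := by
    by_contra hne
    exact hb (ha.trans (deleteEdges_adj.2 ⟨hab, hne⟩).reachable)
  rcases Sym2.eq_iff.1 hab' with hab' | ⟨rfl, rfl⟩
  · exact hab'
  · exact absurd ha (isBridge_iff.1 h)

end SimpleGraph

variable [Fintype V]

theorem Finset.sum_sum_eq_sum_sum_compl_of_antisymm [DecidableEq V] [IsAddTorsionFree M] {g : V → V → M}
    (hg : ∀ a b, g a b = -g b a) (S : Finset V) :
    ∑ a ∈ S, ∑ b, g a b = ∑ a ∈ S, ∑ b ∈ Sᶜ, g a b := by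
  simp only [← sum_add_sum_compl S, sum_add_distrib, sum_sum_eq_zero_of_antisymm hg, zero_add]

theorem apply_eq_zero_of_unique_cut_edge [DecidableEq V] [IsAddTorsionFree M] {g : V → V → M}
    (hg : ∀ a b, g a b = -g b a) (hdiv : ∀ a, ∑ b, g a b = 0) {S : Finset V} {u v : V}
    (hu : u ∈ S) (hv : v ∉ S) (hcut : ∀ a ∈ S, ∀ b ∉ S, (a, b) ≠ (u, v) → g a b = 0) :
    g u v = 0 := by
  have hcut_sum : ∑ a ∈ S, ∑ b ∈ Sᶜ, g a b = g u v := by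
    rw [← sum_product' S Sᶜ g]
    refine sum_eq_single_of_mem (u, v) (mem_product.2 ⟨hu, mem_compl.2 hv⟩) ?_
    rintro ⟨a, b⟩ hab hne
    obtain ⟨ha, hb⟩ := mem_product.1 hab
    exact hcut a ha b (mem_compl.1 hb) hne
  rw [← hcut_sum, ← sum_sum_eq_sum_sum_compl_of_antisymm hg]
  exact sum_eq_zero fun a _ ↦ hdiv a

namespace SimpleGraph

variable {G : SimpleGraph V} {u v : V}

theorem IsBridge.apply_eq_zero_of_antisymm [IsAddTorsionFree M] (h : G.IsBridge s(u, v))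
    {g : V → V → M} (hg : ∀ a b, g a b = -g b a) (hsupp : ∀ a b, ¬ G.Adj a b → g a b = 0)
    (hdiv : ∀ a, ∑ b, g a b = 0) : g u v = 0 := by
  classical
  let S : Finset V := {a | (G.deleteEdges {s(u, v)}).Reachable u a}
  refine apply_eq_zero_of_unique_cut_edge hg hdiv (S := S) (by simp [S])
    (by simpa [S] using isBridge_iff.1 h) fun a ha b hb hne ↦ hsupp a b fun hab ↦ ?_
  obtain ⟨rfl, rfl⟩ := h.eq_of_adj_of_reachable_of_not_reachable (by simpa [S] using ha)
    (by simpa [S] using hb) hab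
  exact hne rfl

end SimpleGraph

end

/-- Any two flows with the same divergence everywhere agree on every bridge
(edge lying on no cycle) of the graph. -/
theorem flows_agree_on_bridges {V : Type*} [Fintype V] (G : SimpleGraph V)
    (u v : V) (hbridge : G.IsBridge s(u, v))
    (f f' : V → V → ℝ)
    (hf_skew : ∀ a b, f a b = - f b a)
    (hf_supp : ∀ a b, ¬ G.Adj a b → f a b = 0)
    (hf'_skew : ∀ a b, f' a b = - f' b a)
    (hf'_supp : ∀ a b, ¬ G.Adj a b → f' a b = 0)
    (hdiv : ∀ a, ∑ b, f a b = ∑ b, f' a b) :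
    f u v = f' u v := by
  have hzero : f u v - f' u v = 0 :=
    hbridge.apply_eq_zero_of_antisymm (g := fun a b ↦ f a b - f' a b)
      (fun a b ↦ by rw [hf_skew a b, hf'_skew a b]; ring)
      (fun a b hab ↦ by rw [hf_supp a b hab, hf'_supp a b hab, sub_zero])
      (fun a ↦ by rw [sum_sub_distrib, hdiv a, sub_self])
  exact sub_eq_zero.1 hzero
end
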